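/- Let G be a finite subgroup of GL(2, ℂ) containing −I. Let Z = {λ ∈ ℂˣ : λI ∈ G} (so −1 ∈ Z and |Z| is even) and let H = {h ∈ SL(2, ℂ) : λ·h ∈ G for some λ ∈ ℂˣ}, a finite subgroup of SL(2, ℂ). Then the number of conjugacy classes of G equals the number of conjugacy classes of H multiplied by |Z|/2; equivalently, 2·c(G) = c(H)·|Z|, where c(−) denotes the number of conjugacy classes. -/

import Mathlib

/-! Put `K = μ⁻¹(G) ≤ ℂˣ × SL(2, ℂ)`. Both `μ : K → G` and the projection `K → H` are
surjective, with kernels `{1, (-1, -1)}` and `Z × 1`. In both cases left multiplication by the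
kernel permutes the conjugacy classes of `K` freely, because the `ℂˣ`-coordinate is a conjugation
invariant. Hence every conjugacy class downstairs has exactly `|kernel|` classes of `K` above it,
and `c(K) = 2 c(G) = |Z| c(H)`. -/

open Matrix

/-- Scalar matrices, as a homomorphism `ℂˣ →* GL(2, ℂ)`. -/
def scalarGL : ℂˣ →* GL (Fin 2) ℂ :=
  Units.map (Matrix.scalar (Fin 2)).toMonoidHom

lemma scalarGL_central (a : ℂˣ) (g : GL (Fin 2) ℂ) :
    scalarGL a * g = g * scalarGL a := by
  apply Units.ext
  show (Matrix.scalar (Fin 2) (a : ℂ)) * (g : Matrix (Fin 2) (Fin 2) ℂ)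
     = (g : Matrix (Fin 2) (Fin 2) ℂ) * (Matrix.scalar (Fin 2) (a : ℂ))
  exact (Matrix.scalar_commute (a : ℂ) (fun r => mul_comm _ _) _)

/-- The homomorphism `μ : ℂˣ × SL(2, ℂ) → GL(2, ℂ)`, `μ(λ, h) = λ·h`. -/
def mu : ℂˣ × Matrix.SpecialLinearGroup (Fin 2) ℂ →* GL (Fin 2) ℂ where
  toFun p := scalarGL p.1 * Matrix.SpecialLinearGroup.toGL p.2
  map_one' := by simp
  map_mul' p q := by
    simp only [Prod.fst_mul, Prod.snd_mul, _root_.map_mul]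
    rw [mul_assoc (scalarGL p.1), ← mul_assoc (scalarGL q.1),
      scalarGL_central q.1 (Matrix.SpecialLinearGroup.toGL p.2)]
    simp [mul_assoc]

def MonoidHom.KerActsFreelyOnConjClasses {K G : Type*} [Group K] [Group G] (ψ : K →* G) : Prop :=
  ∀ n ∈ ψ.ker, ∀ x, IsConj (n * x) x → n = 1

namespace ConjClasses

variable {K G : Type*} [Group K] [Group G] (ψ : K →* G)

theorem mk_mul_ker_injective (hfree : ψ.KerActsFreelyOnConjClasses) (x₀ : K) :
    Function.Injective fun n : ψ.ker => ConjClasses.mk ((n : K) * x₀) := by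
  intro n m hnm
  have hconj : IsConj ((n * m⁻¹ : ψ.ker) * ((m : K) * x₀)) ((m : K) * x₀) := by
    simpa [mul_assoc] using mk_eq_mk_iff_isConj.mp hnm
  exact mul_inv_eq_one.mp (Subtype.ext (hfree _ (n * m⁻¹).2 _ hconj))

theorem exists_mk_mul_ker_eq (hψ : Function.Surjective ψ) (x₀ x : K)
    (hx : ConjClasses.map ψ (ConjClasses.mk x) = ConjClasses.mk (ψ x₀)) :
    ∃ n : ψ.ker, ConjClasses.mk ((n : K) * x₀) = ConjClasses.mk x := by
  obtain ⟨u, hu⟩ := isConj_iff.mp (mk_eq_mk_iff_isConj.mp hx)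
  obtain ⟨v, rfl⟩ := hψ u
  have hker : v * x * v⁻¹ * x₀⁻¹ ∈ ψ.ker := by
    simp [MonoidHom.mem_ker, ← hu]
  refine ⟨⟨_, hker⟩, ?_⟩
  rw [inv_mul_cancel_right, mk_eq_mk_iff_isConj, isConj_comm, isConj_iff]
  exact ⟨v, rfl⟩

noncomputable def kerEquivFiberMap (hψ : Function.Surjective ψ)
    (hfree : ψ.KerActsFreelyOnConjClasses) (x₀ : K) :
    ψ.ker ≃ {d : ConjClasses K // ConjClasses.map ψ d = ConjClasses.mk (ψ x₀)} :=
  Equiv.ofBijective (fun n => ⟨ConjClasses.mk ((n : K) * x₀), by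
    change ConjClasses.mk (ψ (n * x₀)) = _
    rw [map_mul, MonoidHom.mem_ker.mp n.2, one_mul]⟩)
    ⟨fun _ _ h => mk_mul_ker_injective ψ hfree x₀ (congrArg Subtype.val h), by
      rintro ⟨d, hd⟩
      obtain ⟨x, rfl⟩ := d.exists_rep
      obtain ⟨n, hn⟩ := exists_mk_mul_ker_eq ψ hψ x₀ x hd
      exact ⟨n, Subtype.ext hn⟩⟩

theorem card_eq_card_mul_card_ker (hψ : Function.Surjective ψ)
    (hfree : ψ.KerActsFreelyOnConjClasses) :
    Nat.card (ConjClasses K) = Nat.card (ConjClasses G) * Nat.card ψ.ker := by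
  choose x₀ hx₀ using (map_surjective hψ).comp mk_surjective
  have fiberEquiv (c : ConjClasses G) : {d // map ψ d = c} ≃ ψ.ker :=
    (Equiv.subtypeEquivRight fun _ => iff_of_eq (congrArg _ (hx₀ c).symm)).trans
      (kerEquivFiberMap ψ hψ hfree (x₀ c)).symm
  rw [← Nat.card_prod]
  exact Nat.card_congr <| (Equiv.sigmaFiberEquiv (map ψ)).symm.trans <|
    (Equiv.sigmaCongrRight fiberEquiv).trans (Equiv.sigmaEquivProd _ _)

end ConjClasses

theorem MonoidHom.card_ker_subgroupComap {G G' : Type*} [Group G] [Group G'] (f : G →* G')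
    (H : Subgroup G') : Nat.card (f.subgroupComap H).ker = Nat.card f.ker := by
  have hker : (f.subgroupComap H).ker = f.ker.subgroupOf (H.comap f) :=
    Subgroup.ext fun _ => Subtype.ext_iff
  have hle : f.ker ≤ H.comap f := fun x hx => by
    simp [Subgroup.mem_comap, MonoidHom.mem_ker.mp hx, H.one_mem]
  rw [hker]
  exact Nat.card_congr (Subgroup.subgroupOfEquivOfLe hle).toEquiv

namespace Subgroup

variable {A B : Type*} [CommGroup A] [Group B] (K : Subgroup (A × B))

theorem fst_eq_of_isConj {x y : K} (h : IsConj x y) : (x : A × B).1 = (y : A × B).1 :=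
  isConj_iff_eq.mp (((MonoidHom.fst A B).comp K.subtype).map_isConj h)

def kerSubgroupMapSndEquiv :
    ((MonoidHom.snd A B).subgroupMap K).ker ≃ K.comap (MonoidHom.inl A B) where
  toFun n := ⟨(n : K).1.1, by
    have hn : (n : K).1.2 = 1 := congrArg Subtype.val n.2
    change ((n : K).1.1, (1 : B)) ∈ K
    rw [← hn]
    exact (n : K).2⟩
  invFun a := ⟨⟨(a, 1), a.2⟩, Subtype.ext rfl⟩
  left_inv n := by
    have hn : (n : K).1.2 = 1 := congrArg Subtype.val n.2
    ext <;> simp [hn]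
  right_inv _ := rfl

theorem card_conjClasses_eq_map_snd_mul_comap_inl :
    Nat.card (ConjClasses K) =
      Nat.card (ConjClasses (K.map (MonoidHom.snd A B))) *
        Nat.card (K.comap (MonoidHom.inl A B)) := by
  rw [ConjClasses.card_eq_card_mul_card_ker _ ((MonoidHom.snd A B).subgroupMap_surjective K),
    Nat.card_congr K.kerSubgroupMapSndEquiv]
  intro n hn x hconj
  have hn₁ : (n : A × B).1 = 1 := mul_eq_right.mp (K.fst_eq_of_isConj hconj)
  have hn₂ : (n : A × B).2 = 1 := congrArg Subtype.val hn
  exact Subtype.ext (Prod.ext hn₁ hn₂)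

end Subgroup

lemma coe_mu (p : ℂˣ × SpecialLinearGroup (Fin 2) ℂ) :
    ((mu p : GL (Fin 2) ℂ) : Matrix (Fin 2) (Fin 2) ℂ) =
      (p.1 : ℂ) • (p.2 : Matrix (Fin 2) (Fin 2) ℂ) := by
  change scalar (Fin 2) (p.1 : ℂ) * (p.2 : Matrix (Fin 2) (Fin 2) ℂ) = _
  rw [scalar_apply, ← smul_eq_diagonal_mul]

lemma mu_comp_inl : mu.comp (MonoidHom.inl _ _) = scalarGL := by
  ext a : 1
  simp [mu]

lemma mu_surjective : Function.Surjective mu := by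
  intro g
  obtain ⟨l, hl⟩ := IsAlgClosed.exists_pow_nat_eq (g : Matrix (Fin 2) (Fin 2) ℂ).det two_pos
  have hl0 : l ≠ 0 := by
    rintro rfl
    exact (isUnits_det_units g).ne_zero (by simpa using hl.symm)
  have hdet : (l⁻¹ • (g : Matrix (Fin 2) (Fin 2) ℂ)).det = 1 := by
    rw [det_smul, Fintype.card_fin, ← hl, inv_pow, inv_mul_cancel₀ (pow_ne_zero 2 hl0)]
  refine ⟨(Units.mk0 l hl0, ⟨_, hdet⟩), Units.ext ?_⟩
  rw [coe_mu]
  exact smul_inv_smul₀ hl0 _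

lemma mem_ker_mu {p : ℂˣ × SpecialLinearGroup (Fin 2) ℂ} :
    p ∈ mu.ker ↔ p = 1 ∨ p = (-1, -1) := by
  constructor
  · intro hp
    have hsmul : (p.1 : ℂ) • (p.2 : Matrix (Fin 2) (Fin 2) ℂ) = 1 := by
      rw [← coe_mu, MonoidHom.mem_ker.mp hp, Units.val_one]
    have hsq : (p.1 : ℂ) ^ 2 = 1 := by
      simpa [det_smul] using congrArg det hsmul
    rcases sq_eq_one_iff.mp hsq with h | h
    · rw [h, one_smul] at hsmul
      exact Or.inl (Prod.ext (Units.ext h) (Subtype.ext hsmul))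
    · rw [h, neg_one_smul, neg_eq_iff_eq_neg] at hsmul
      exact Or.inr (Prod.ext (Units.ext h) (Subtype.ext hsmul))
  · rintro (rfl | rfl)
    · exact one_mem _
    · exact MonoidHom.mem_ker.mpr (Units.ext (by simp [coe_mu]))

lemma card_ker_mu : Nat.card mu.ker = 2 := by
  have hker : (mu.ker : Set (ℂˣ × SpecialLinearGroup (Fin 2) ℂ)) = {1, (-1, -1)} :=
    Set.ext fun _ => mem_ker_mu
  rw [← SetLike.coe_sort_coe, hker, Nat.card_coe_set_eq, Set.ncard_pair]
  intro h
  exact absurd (congrArg (fun p => (p.1 : ℂ)) h) (by norm_num)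

lemma kerActsFreelyOnConjClasses_subgroupComap_mu (G : Subgroup (GL (Fin 2) ℂ)) :
    (mu.subgroupComap G).KerActsFreelyOnConjClasses := by
  intro n hn x hconj
  have hn' : (n : ℂˣ × SpecialLinearGroup (Fin 2) ℂ) ∈ mu.ker :=
    MonoidHom.mem_ker.mpr (congrArg Subtype.val (MonoidHom.mem_ker.mp hn))
  rcases mem_ker_mu.mp hn' with h | h
  · exact Subtype.ext h
  · have hfst := (G.comap mu).fst_eq_of_isConj hconj
    rw [Subgroup.coe_mul, Prod.fst_mul, h] at hfst
    exact absurd (CharZero.neg_eq_self_iff.mp (by simpa using congrArg Units.val hfst))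
      (Units.ne_zero _)

theorem conjClasses_card_eq_of_neg_one_mem_general
    (G : Subgroup (GL (Fin 2) ℂ)) :
    2 * Nat.card (ConjClasses ↥G)
      = Nat.card (ConjClasses
          ↥(Subgroup.map (MonoidHom.snd ℂˣ (Matrix.SpecialLinearGroup (Fin 2) ℂ))
              (Subgroup.comap mu G)))
        * Nat.card ↥(Subgroup.comap scalarGL G) := by
  have hK := (G.comap mu).card_conjClasses_eq_map_snd_mul_comap_inl
  rw [Subgroup.comap_comap, mu_comp_inl] at hK
  have hG := ConjClasses.card_eq_card_mul_card_ker (mu.subgroupComap G)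
    (mu.subgroupComap_surjective_of_surjective G mu_surjective)
    (kerActsFreelyOnConjClasses_subgroupComap_mu G)
  rw [MonoidHom.card_ker_subgroupComap, card_ker_mu] at hG
  rw [← hK, hG, mul_comm]

/-- Let `G ⊂ GL(2, ℂ)` be a finite subgroup containing `-I`,
let `Z = {λ ∈ ℂˣ : λI ∈ G}` and let
`H = {h ∈ SL(2, ℂ) : λ·h ∈ G for some λ ∈ ℂˣ}`. Then
`2·c(G) = c(H)·|Z|`, where `c(−)` is the number of conjugacy classes. -/
theorem conjClasses_card_eq_of_neg_one_mem
    (G : Subgroup (GL (Fin 2) ℂ)) (hGfin : (G : Set (GL (Fin 2) ℂ)).Finite)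
    (hnegI : (-1 : GL (Fin 2) ℂ) ∈ G) :
    2 * Nat.card (ConjClasses ↥G)
      = Nat.card (ConjClasses
          ↥(Subgroup.map (MonoidHom.snd ℂˣ (Matrix.SpecialLinearGroup (Fin 2) ℂ))
              (Subgroup.comap mu G)))
        * Nat.card ↥(Subgroup.comap scalarGL G) :=
  conjClasses_card_eq_of_neg_one_mem_general G
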